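/- arXiv:1406.6940 — 5 statements merged into one kernel-verified Lean document; each statement's English description precedes it below -/
import Mathlib

section
/- Let 0<γ<1, K>0, a>0, r>0. If (a²γ)/(2(1−γ)) − r ≤ −rγ, then for all x>0 the function U(x) = (1/γ)(x+K)^γ satisfies −(a²/(2(1−γ)))(x+K)^γ − r x (x+K)^{γ−1} + (r/γ)(x+K)^γ ≥ 0. -/
/-!
Factor out `(x + K) ^ (γ - 1)`: the remaining bracket is `c * (x + K) + r * K` with
`c = r / γ - r - a ^ 2 / (2 * (1 - γ))`, and dividing the hypothesis by `γ` shows `c ≥ 0`.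
-/

lemma neg_mul_rpow_sub_mul_rpow_sub_one_add_mul_rpow {y : ℝ} (hy : 0 < y) (p A B r x : ℝ) :
    -A * y ^ p - r * x * y ^ (p - 1) + B * y ^ p
      = y ^ (p - 1) * ((B - A - r) * y + r * (y - x)) := by
  rw [show y ^ p = y ^ (p - 1) * y by rw [← Real.rpow_add_one hy.ne']; ring_nf]
  ring

lemma div_sub_sub_nonneg {γ A r : ℝ} (hγ : 0 < γ) (h : γ * A - r ≤ -r * γ) :
    0 ≤ r / γ - A - r := by
  have hdiv : r / γ - A - r = (r - r * γ - γ * A) / γ := by field_simp; ring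
  rw [hdiv]
  exact div_nonneg (by linarith) hγ.le

theorem stmt_0_general (γ K a r : ℝ) (hγ : 0 < γ) (hK : 0 < K)
    (hr : 0 < r)
    (hcond : a ^ 2 * γ / (2 * (1 - γ)) - r ≤ -r * γ) :
    ∀ x : ℝ, 0 < x →
      -(a ^ 2 / (2 * (1 - γ))) * (x + K) ^ γ - r * x * (x + K) ^ (γ - 1)
        + (r / γ) * (x + K) ^ γ ≥ 0 := by
  intro x hx
  have hy : 0 < x + K := by linarith
  rw [ge_iff_le, neg_mul_rpow_sub_mul_rpow_sub_one_add_mul_rpow hy, add_sub_cancel_left]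
  have hc : 0 ≤ r / γ - a ^ 2 / (2 * (1 - γ)) - r :=
    div_sub_sub_nonneg hγ (by convert hcond using 2; ring)
  have hpow := Real.rpow_pos_of_pos hy (γ - 1)
  positivity

theorem stmt_0 (γ K a r : ℝ) (hγ : 0 < γ) (hγ1 : γ < 1) (hK : 0 < K)
    (ha : 0 < a) (hr : 0 < r)
    (hcond : a ^ 2 * γ / (2 * (1 - γ)) - r ≤ -r * γ) :
    ∀ x : ℝ, 0 < x →
      -(a ^ 2 / (2 * (1 - γ))) * (x + K) ^ γ - r * x * (x + K) ^ (γ - 1)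
        + (r / γ) * (x + K) ^ γ ≥ 0 :=
  stmt_0_general γ K a r hγ hK hr hcond
end

section
/- Let 0<γ<1, a>0, r>0, K>0 with −rγ < (a²γ)/(2(1−γ)) − r. Define w(y) = K − y^{1/(γ−1)} for y>0. Then for all y>0: −(a²/2)y² w″(y) − a² y w′(y) + r w(y) = rK + ((a²γ)/(2(1−γ)²) − r)·y^{1/(γ−1)} > 0. -/
theorem stmt_8 (γ K a r : ℝ) (hγ : 0 < γ) (hγ1 : γ < 1) (hK : 0 < K)
    (ha : 0 < a) (hr : 0 < r)
    (hcond : -r * γ < a ^ 2 * γ / (2 * (1 - γ)) - r) :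
    let w : ℝ → ℝ := fun y => K - y ^ (1 / (γ - 1))
    ∀ y : ℝ, 0 < y →
      -(a ^ 2 / 2) * y ^ 2 * deriv (deriv w) y - a ^ 2 * y * deriv w y + r * w y
          = r * K + (a ^ 2 * γ / (2 * (1 - γ) ^ 2) - r) * y ^ (1 / (γ - 1)) ∧
        0 < r * K + (a ^ 2 * γ / (2 * (1 - γ) ^ 2) - r) * y ^ (1 / (γ - 1)) := by
  intro w y hy
  have hne : γ - 1 ≠ 0 := by linarith
  set p : ℝ := 1 / (γ - 1) with hp
  have hy0 : y ≠ 0 := ne_of_gt hy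
  have hd1 : ∀ x : ℝ, x ≠ 0 → HasDerivAt w (-(p * x ^ (p - 1))) x := by
    intro x hx
    have h := Real.hasDerivAt_rpow_const (x := x) (p := p) (Or.inl hx)
    simpa [w, hp, one_div] using (hasDerivAt_const x K).fun_sub h
  have hderiv1 : ∀ x : ℝ, x ≠ 0 → deriv w x = -(p * x ^ (p - 1)) := fun x hx =>
    (hd1 x hx).deriv
  have hEq : deriv w =ᶠ[nhds y] fun x => -(p * x ^ (p - 1)) := by
    filter_upwards [eventually_ne_nhds hy0] with x hx using hderiv1 x hx
  have hd2 : HasDerivAt (fun x : ℝ => -(p * x ^ (p - 1)))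
      (-(p * ((p - 1) * y ^ (p - 1 - 1)))) y := by
    have h := Real.hasDerivAt_rpow_const (x := y) (p := p - 1) (Or.inl hy0)
    simpa [mul_comm, mul_assoc, mul_left_comm] using (h.const_mul p).fun_neg
  have hderiv2 : deriv (deriv w) y = -(p * ((p - 1) * y ^ (p - 1 - 1))) := by
    rw [hEq.deriv_eq]; exact hd2.deriv
  have hyp : y ^ p = y ^ p := rfl
  have h2 : y ^ (p - 1) = y ^ p / y := by
    rw [Real.rpow_sub hy, Real.rpow_one]
  have h3 : y ^ (p - 1 - 1) = y ^ p / y / y := by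
    rw [Real.rpow_sub hy, Real.rpow_sub hy, Real.rpow_one]
  have h1γ : 0 < 1 - γ := by linarith
  have h1γ' : (1 - γ) ≠ 0 := ne_of_gt h1γ
  have h4 : r * (1 - γ) < a ^ 2 * γ / (2 * (1 - γ)) := by linarith
  have h5 : 2 * r * (1 - γ) ^ 2 < a ^ 2 * γ := by
    have h6 := (lt_div_iff₀ (by positivity : (0:ℝ) < 2 * (1 - γ))).mp h4
    nlinarith [h6]
  have hcoef : a ^ 2 * γ / (2 * (1 - γ) ^ 2) - r > 0 := by
    rw [gt_iff_lt, sub_pos, lt_div_iff₀ (by positivity)]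
    nlinarith [h5]
  constructor
  · rw [hderiv1 y hy0, hderiv2, h2, h3]
    show -(a ^ 2 / 2) * y ^ 2 * _ - a ^ 2 * y * _ + r * (K - y ^ p)
        = r * K + (a ^ 2 * γ / (2 * (1 - γ) ^ 2) - r) * y ^ p
    have hC : a ^ 2 * γ / (2 * (1 - γ) ^ 2) = a ^ 2 / 2 * (p * (p - 1)) + a ^ 2 * p := by
      rw [hp]; field_simp; ring
    rw [hC]
    field_simp
    ring
  · have hpos : 0 < y ^ p := Real.rpow_pos_of_pos hy p
    nlinarith [hcoef, hpos]
end

section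
/- Let 0<γ<1, a>0, r>0, K>0. Set A = (a²/2)·γ/(1−γ)² and φ(y) = ((1−γ)/γ)y^{γ/(γ−1)} + Ky. Define W(y,t) = e^{A(T−t)}·φ(y) for 0<y and 0≤t≤T. Then −∂_tW − (a²/2)y²∂_{yy}W + rW ≥ 0 for all y > 0 and 0 ≤ t ≤ T. -/
/-!
Time and space separate: `-∂ₜW = A W`, and since the coefficient `(1 - γ)/γ` of the power
`y ^ p`, `p = γ/(γ - 1)`, satisfies `((1 - γ)/γ) p (p - 1) = 1/(1 - γ)`, the constant `A` is chosen
exactly so that `A W` cancels the power part of `(a²/2) y² ∂_{yy}W`. What is left is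
`e^{A(T-t)} (A K y + r φ(y))`, which is positive.
-/

open Real

lemma deriv_exp_mul_sub_mul (A T c t : ℝ) :
    deriv (fun s => exp (A * (T - s)) * c) t = -A * (exp (A * (T - t)) * c) := by
  have h : HasDerivAt (fun s => A * (T - s)) (A * -1) t :=
    ((hasDerivAt_id t).const_sub T).const_mul A
  rw [(h.exp.mul_const c).deriv]
  ring

lemma deriv_rpow_add_mul {z : ℝ} (hz : z ≠ 0) (c p K : ℝ) :
    deriv (fun x => c * x ^ p + K * x) z = c * (p * z ^ (p - 1)) + K :=
  (((hasDerivAt_rpow_const (Or.inl hz)).const_mul c).add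
    ((hasDerivAt_id z).const_mul K)).deriv.trans (by ring)

lemma deriv_deriv_rpow_add_mul {y : ℝ} (hy : y ≠ 0) (c p K : ℝ) :
    deriv (deriv fun x => c * x ^ p + K * x) y = c * (p * ((p - 1) * y ^ (p - 2))) := by
  have hnear : (deriv fun x => c * x ^ p + K * x) =ᶠ[nhds y] fun x => c * (p * x ^ (p - 1)) + K :=
    Filter.mem_of_superset (isOpen_ne.mem_nhds hy) fun z hz => deriv_rpow_add_mul hz c p K
  rw [hnear.deriv_eq, deriv_add_const, deriv_const_mul_field, deriv_const_mul_field,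
    Real.deriv_rpow_const, sub_sub, one_add_one_eq_two]

lemma sq_mul_rpow_sub_two {y : ℝ} (hy : 0 < y) (p : ℝ) : y ^ 2 * y ^ (p - 2) = y ^ p := by
  rw [← rpow_natCast, ← rpow_add hy]
  norm_num

lemma one_sub_div_mul_conjugate_exponent {γ : ℝ} (hγ : γ ≠ 0) (hγ1 : γ ≠ 1) :
    (1 - γ) / γ * (γ / (γ - 1) * (γ / (γ - 1) - 1)) = 1 / (1 - γ) := by
  have : γ - 1 ≠ 0 := sub_ne_zero.mpr hγ1
  have : 1 - γ ≠ 0 := sub_ne_zero.mpr hγ1.symm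
  field_simp
  ring

theorem stmt_10_general (γ K a r T : ℝ) (hγ : 0 < γ) (hγ1 : γ < 1) (hK : 0 < K)
    (hr : 0 < r) :
    let A : ℝ := (a ^ 2 / 2) * γ / (1 - γ) ^ 2
    let φ : ℝ → ℝ := fun y => ((1 - γ) / γ) * y ^ (γ / (γ - 1)) + K * y
    let W : ℝ → ℝ → ℝ := fun y t => Real.exp (A * (T - t)) * φ y
    ∀ y t : ℝ, 0 < y → 0 ≤ t → t ≤ T →
      -(deriv (fun s => W y s) t)
          - (a ^ 2 / 2) * y ^ 2 * deriv (deriv (fun z => W z t)) y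
          + r * W y t ≥ 0 := by
  intro A φ W y t hy _ _
  set p := γ / (γ - 1)
  set c := (1 - γ) / γ
  set E := exp (A * (T - t))
  have hc : 0 < c := div_pos (by linarith) hγ
  have hφ : 0 < φ y := by positivity
  have hA : 0 ≤ A := by positivity
  have hAc : A * c = (a ^ 2 / 2) * (1 / (1 - γ)) := by
    have : 1 - γ ≠ 0 := by linarith
    simp only [A, c]
    field_simp
  have hWyy : deriv (deriv fun z => W z t) y = E * (c * (p * ((p - 1) * y ^ (p - 2)))) := by
    simp only [W, deriv_const_mul_field']
    exact congrArg (E * ·) (deriv_deriv_rpow_add_mul hy.ne' c p K)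
  have hgen : -(deriv (fun s => W y s) t) - (a ^ 2 / 2) * y ^ 2 * deriv (deriv fun z => W z t) y
      + r * W y t = E * (A * K * y + r * φ y) := by
    rw [deriv_exp_mul_sub_mul, hWyy]
    have hpow := sq_mul_rpow_sub_two hy p
    have hcoeff := one_sub_div_mul_conjugate_exponent hγ.ne' hγ1.ne
    simp only [W, φ]
    linear_combination (a ^ 2 / 2) * E * (c * (p * (p - 1))) * (-hpow) + E * y ^ p * hAc
      - (a ^ 2 / 2) * E * y ^ p * hcoeff
  rw [hgen]
  positivity

theorem stmt_10 (γ K a r T : ℝ) (hγ : 0 < γ) (hγ1 : γ < 1) (hK : 0 < K)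
    (ha : 0 < a) (hr : 0 < r) (hT : 0 < T) :
    let A : ℝ := (a ^ 2 / 2) * γ / (1 - γ) ^ 2
    let φ : ℝ → ℝ := fun y => ((1 - γ) / γ) * y ^ (γ / (γ - 1)) + K * y
    let W : ℝ → ℝ → ℝ := fun y t => Real.exp (A * (T - t)) * φ y
    ∀ y t : ℝ, 0 < y → 0 ≤ t → t ≤ T →
      -(deriv (fun s => W y s) t)
          - (a ^ 2 / 2) * y ^ 2 * deriv (deriv (fun z => W z t)) y
          + r * W y t ≥ 0 :=
  stmt_10_general γ K a r T hγ hγ1 hK hr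
end

section
/- Let 0<γ<1, K>0, y>0, and let u, p ∈ ℝ satisfy u ≥ ((1−γ)/γ)y^{γ/(γ−1)} + Ky and p ≤ K − y^{1/(γ−1)}. Then u ≥ y·p + (1/γ)(K − p)^γ. -/
/-! The bound is the Fenchel–Young inequality for the concave power `z ↦ z ^ γ / γ`: by weighted
AM–GM with weights `γ, 1 - γ` applied to `y z` and `y ^ (γ / (γ - 1))`, whose weighted geometric
mean is exactly `z ^ γ`, one gets `z ^ γ / γ ≤ y z + ((1 - γ) / γ) y ^ (γ / (γ - 1))` for every
`z ≥ 0`. Take `z = K - p`, which is nonnegative because `p ≤ K - y ^ (1 / (γ - 1))`. -/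

open Real

theorem rpow_le_mul_mul_add_one_sub_mul_rpow {γ y z : ℝ} (hγ : 0 ≤ γ) (hγ1 : γ < 1) (hy : 0 < y)
    (hz : 0 ≤ z) : z ^ γ ≤ γ * (y * z) + (1 - γ) * y ^ (γ / (γ - 1)) := by
  have hγ1' : γ - 1 ≠ 0 := by linarith
  have geom_mean : (y * z) ^ γ * (y ^ (γ / (γ - 1))) ^ (1 - γ) = z ^ γ := by
    rw [mul_rpow hy.le hz, ← rpow_mul hy.le, mul_right_comm, ← rpow_add hy]
    have : γ + γ / (γ - 1) * (1 - γ) = 0 := by field_simp; ring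
    rw [this, rpow_zero, one_mul]
  rw [← geom_mean]
  exact geom_mean_le_arith_mean2_weighted hγ (by linarith) (by positivity) (by positivity)
    (by ring)

theorem stmt_14_general (γ K y u p : ℝ) (hγ : 0 < γ) (hγ1 : γ < 1)
    (hy : 0 < y)
    (hu : u ≥ ((1 - γ) / γ) * y ^ (γ / (γ - 1)) + K * y)
    (hp : p ≤ K - y ^ (1 / (γ - 1))) :
    u ≥ y * p + (1 / γ) * (K - p) ^ γ := by
  have hz : 0 ≤ K - p := by linarith [rpow_pos_of_pos hy (1 / (γ - 1))]
  have young := rpow_le_mul_mul_add_one_sub_mul_rpow hγ.le hγ1 hy hz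
  calc y * p + (1 / γ) * (K - p) ^ γ
      ≤ y * p + (1 / γ) * (γ * (y * (K - p)) + (1 - γ) * y ^ (γ / (γ - 1))) := by gcongr
    _ = ((1 - γ) / γ) * y ^ (γ / (γ - 1)) + K * y := by field_simp; ring
    _ ≤ u := hu

theorem stmt_14 (γ K y u p : ℝ) (hγ : 0 < γ) (hγ1 : γ < 1) (hK : 0 < K)
    (hy : 0 < y)
    (hu : u ≥ ((1 - γ) / γ) * y ^ (γ / (γ - 1)) + K * y)
    (hp : p ≤ K - y ^ (1 / (γ - 1))) :
    u ≥ y * p + (1 / γ) * (K - p) ^ γ :=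
  stmt_14_general γ K y u p hγ hγ1 hy hu hp
end

section
/- Let 0<γ<1, a>0, r>0, K>0 with (a²γ)/(2(1−γ)) − r ≤ −rγ. Then for U(x) = (1/γ)(x+K)^γ, with U′(x) = (x+K)^{γ−1} and U″(x) = −(1−γ)(x+K)^{γ−2}, the Hamiltonian inequality (a²/2)·(U′(x))²/U″(x) − r x U′(x) + r U(x) ≥ 0 holds for all x > 0. -/
theorem stmt_19 (γ K a r : ℝ) (hγ : 0 < γ) (hγ1 : γ < 1) (hK : 0 < K)
    (ha : 0 < a) (hr : 0 < r)
    (hcond : a ^ 2 * γ / (2 * (1 - γ)) - r ≤ -r * γ) :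
    ∀ x : ℝ, 0 < x →
      (a ^ 2 / 2) * ((x + K) ^ (γ - 1)) ^ 2 / (-(1 - γ) * (x + K) ^ (γ - 2))
          - r * x * (x + K) ^ (γ - 1) + (r / γ) * (x + K) ^ γ ≥ 0 := by
  intro x hx
  have hy : 0 < x + K := by linarith
  have h1γ : 0 < 1 - γ := by linarith
  have ht : 0 < (x + K) ^ (γ - 1) := Real.rpow_pos_of_pos hy _
  have h2 : (x + K) ^ (γ - 2) = (x + K) ^ (γ - 1) / (x + K) := by
    rw [eq_div_iff hy.ne', ← Real.rpow_add_one hy.ne']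
    ring_nf
  have h3 : (x + K) ^ γ = (x + K) ^ (γ - 1) * (x + K) := by
    rw [← Real.rpow_add_one hy.ne']
    ring_nf
  have hc' : a ^ 2 * γ ≤ (r - r * γ) * (2 * (1 - γ)) := by
    have := (div_le_iff₀ (by positivity : (0:ℝ) < 2 * (1 - γ))).mp
      (by linarith : a ^ 2 * γ / (2 * (1 - γ)) ≤ r - r * γ)
    linarith
  have h4 : a ^ 2 / (2 * (1 - γ)) ≤ r * (1 - γ) / γ := by
    rw [div_le_div_iff₀ (by positivity) hγ]
    nlinarith
  have h5 : r ≤ r / γ - a ^ 2 / (2 * (1 - γ)) := by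
    have h6 : r / γ - r * (1 - γ) / γ = r := by
      field_simp
      ring
    linarith
  have hkey : 0 ≤ (r / γ - a ^ 2 / (2 * (1 - γ))) * (x + K) - r * x := by
    nlinarith [mul_le_mul_of_nonneg_right h5 hy.le]
  have heq : (a ^ 2 / 2) * ((x + K) ^ (γ - 1)) ^ 2 / (-(1 - γ) * (x + K) ^ (γ - 2))
          - r * x * (x + K) ^ (γ - 1) + (r / γ) * (x + K) ^ γ
        = (x + K) ^ (γ - 1) * ((r / γ - a ^ 2 / (2 * (1 - γ))) * (x + K) - r * x) := by
    rw [h2, h3]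
    generalize ht0 : (x + K) ^ (γ - 1) = t at ht ⊢
    have hne : -(1 - γ) * (t / (x + K)) ≠ 0 := by
      apply mul_ne_zero (by linarith)
      exact div_ne_zero ht.ne' hy.ne'
    have hdiv : a ^ 2 / 2 * t ^ 2 / (-(1 - γ) * (t / (x + K)))
        = -(a ^ 2 / (2 * (1 - γ)) * (t * (x + K))) := by
      rw [div_eq_iff hne]
      field_simp
    rw [hdiv]
    field_simp
    ring
  rw [heq]
  exact mul_nonneg ht.le hkey
end
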